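/- Let n, ξ ∈ ℕ, let (a_i)_{i=1}^n be a non-increasing finite sequence of non-negative real numbers and let t_1 < ⋯ < t_n be natural numbers. Then ‖Σ_{i=1}^n (−1)^i a_i e_{t_i}‖_{Cξ} ≤ ‖Σ_{i=1}^n a_i e_{t_i}‖_ξ, where ‖·‖_ξ is the Schreier norm and ‖·‖_{Cξ} is the conditional Schreier norm on c00. -/

import Mathlib

open Filter Topology

open scoped Classical

noncomputable section

namespace Gasparis

/-! ## Schreier families and admissibility -/

/-- `E < F` for finite sets: every element of `E` is smaller than every element of `F`. -/
def FinLt (E F : Finset ℕ) : Prop := ∀ i ∈ E, ∀ j ∈ F, i < j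

/-- The Schreier families `S_n`. -/
def Schreier : ℕ → Set (Finset ℕ)
  | 0 => {F | F.card ≤ 1}
  | n + 1 => {F | F = ∅ ∨ ∃ (k : ℕ) (G : ℕ → Finset ℕ), 0 < k ∧
      (∀ i < k, G i ∈ Schreier n ∧ (G i).Nonempty) ∧
      (∀ i j, i < j → j < k → FinLt (G i) (G j)) ∧
      (∀ j ∈ G 0, k ≤ j) ∧
      F = (Finset.range k).biUnion G}

/-- Minimum of a finite set of naturals (junk value `0` for `∅`). -/
def minF (I : Finset ℕ) : ℕ := sInf (I : Set ℕ)

/-- Minimum of the support of a finitely supported sequence. -/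
def minSupp (f : ℕ →₀ ℝ) : ℕ := minF f.support

/-- `I 0 < I 1 < ⋯ < I (k-1)` is an `S_n`-admissible collection. -/
def Admissible (n k : ℕ) (I : ℕ → Finset ℕ) : Prop :=
  (∀ i < k, (I i).Nonempty) ∧
  (∀ i j, i < j → j < k → FinLt (I i) (I j)) ∧
  ((Finset.range k).image fun i => minF (I i)) ∈ Schreier n

/-- An (unordered) family of finite sets is `S_n`-admissible. -/
def FamAdmissible (n : ℕ) (𝓕 : Finset (Finset ℕ)) : Prop :=
  (∀ I ∈ 𝓕, I.Nonempty) ∧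
  (∀ I ∈ 𝓕, ∀ J ∈ 𝓕, I ≠ J → FinLt I J ∨ FinLt J I) ∧
  𝓕.image minF ∈ Schreier n

/-- `F` is a maximal (under inclusion) member of `S_n`. -/
def MaximalSchreier (n : ℕ) (F : Finset ℕ) : Prop :=
  F ∈ Schreier n ∧ ∀ G ∈ Schreier n, F ⊆ G → G = F

/-! ## The Schreier and conditional Schreier norms on `c₀₀ = ℕ →₀ ℝ` -/

/-- The `n`-th Schreier norm on `c₀₀`. -/
def schreierNorm (n : ℕ) (x : ℕ →₀ ℝ) : ℝ :=
  sSup {r : ℝ | ∃ F ∈ Schreier n, r = ∑ i ∈ F, |x i|}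

/-- The `n`-th conditional Schreier norm on `c₀₀`. -/
def cschreierNorm (n : ℕ) (x : ℕ →₀ ℝ) : ℝ :=
  sSup {r : ℝ | ∃ (k : ℕ) (J : ℕ → Finset ℕ),
    (∀ i < k, ∃ a b : ℕ, J i = Finset.Icc a b) ∧ Admissible n k J ∧
    r = ∑ i ∈ Finset.range k, |∑ p ∈ J i, x p|}

/-! ## Block sequences, described by their coefficients -/

/-- A block basis, given by the (finitely supported) coefficient sequences of its vectors:
successive nonempty supports. -/
def IsBlockSeq (u : ℕ → ℕ →₀ ℝ) : Prop :=
  (∀ k, u k ≠ 0) ∧ ∀ k, ∀ i ∈ (u k).support, ∀ j ∈ (u (k + 1)).support, i < j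

/-- `v` is a block basis of the block basis `u`. -/
def IsBlockSeqOf (v u : ℕ → ℕ →₀ ℝ) : Prop :=
  IsBlockSeq v ∧ ∃ d : ℕ → ℕ →₀ ℝ, IsBlockSeq d ∧
    ∀ k, v k = (d k).sum fun i a => a • u i

/-- The vector of `X` with coefficients `f` with respect to the sequence `e`. -/
def vecIn {X : Type*} [AddCommGroup X] [Module ℝ X] (e : ℕ → X) (f : ℕ →₀ ℝ) : X :=
  f.sum fun i a => a • e i

/-! ## Schauder bases -/

/-- A Schauder basis of a Banach space, bundled with its biorthogonal functionals. -/
structure SchauderBasis (X : Type*) [NormedAddCommGroup X] [NormedSpace ℝ X] where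
  e : ℕ → X
  coord : ℕ → X →L[ℝ] ℝ
  biorth : ∀ i j, coord i (e j) = if i = j then (1 : ℝ) else 0
  expand : ∀ x : X, Tendsto (fun k => ∑ i ∈ Finset.range k, coord i x • e i) atTop (𝓝 x)

variable {X : Type*}

def NormalizedBasis [NormedAddCommGroup X] [NormedSpace ℝ X] (b : SchauderBasis X) : Prop :=
  ∀ i, ‖b.e i‖ = 1

/-- Every projection onto an interval of coordinates has norm at most `1`. -/
def Bimonotone [NormedAddCommGroup X] [NormedSpace ℝ X] (b : SchauderBasis X) : Prop :=
  ∀ (x : X) (a c : ℕ), ‖∑ i ∈ Finset.Icc a c, b.coord i x • b.e i‖ ≤ ‖x‖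

/-- The biorthogonal functionals form a basis of the dual: the expansion of every
continuous functional converges to it. -/
def Shrinking [NormedAddCommGroup X] [NormedSpace ℝ X] (b : SchauderBasis X) : Prop :=
  ∀ f : X →L[ℝ] ℝ,
    Tendsto (fun k => ‖f - ∑ i ∈ Finset.range k, f (b.e i) • b.coord i‖) atTop (𝓝 (0 : ℝ))

def BoundedlyComplete [NormedAddCommGroup X] [NormedSpace ℝ X] (b : SchauderBasis X) : Prop :=
  ∀ a : ℕ → ℝ, (∃ C : ℝ, ∀ k, ‖∑ i ∈ Finset.range k, a i • b.e i‖ ≤ C) →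
    ∃ x : X, Tendsto (fun k => ∑ i ∈ Finset.range k, a i • b.e i) atTop (𝓝 x)

/-- `1`-unconditionality: changing signs of coefficients does not increase the norm. -/
def OneUnconditional [NormedAddCommGroup X] [NormedSpace ℝ X] (b : SchauderBasis X) : Prop :=
  ∀ (a ε : ℕ → ℝ) (F : Finset ℕ), (∀ i, ε i = 1 ∨ ε i = -1) →
    ‖∑ i ∈ F, (ε i * a i) • b.e i‖ ≤ ‖∑ i ∈ F, a i • b.e i‖

/-! ## Spreading models, asymptotic `ℓ¹` and the distortion property -/

/-- `(x_n)` is an `ε`-`ℓ¹ⁿ` spreading model. -/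
def SpreadingModelL1 [NormedAddCommGroup X] [NormedSpace ℝ X]
    (x : ℕ → X) (ε : ℝ) (n : ℕ) : Prop :=
  ∀ F ∈ Schreier n, ∀ a : ℕ → ℝ, ε * ∑ i ∈ F, |a i| ≤ ‖∑ i ∈ F, a i • x i‖

/-- Every normalized block basis of `(e_n)` is an `ε`-`ℓ¹ⁿ` spreading model. -/
def AsymptoticL1 [NormedAddCommGroup X] [NormedSpace ℝ X]
    (b : SchauderBasis X) (ε : ℝ) (n : ℕ) : Prop :=
  ∀ u : ℕ → ℕ →₀ ℝ, IsBlockSeq u → (∀ k, ‖vecIn b.e (u k)‖ = 1) →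
    SpreadingModelL1 (fun k => vecIn b.e (u k)) ε n

/-- The modulus `τ(U, δ) ∈ ℕ∞` of the block subspace `U` generated by the block basis `u`. -/
def tau [NormedAddCommGroup X] [NormedSpace ℝ X]
    (e : ℕ → X) (u : ℕ → ℕ →₀ ℝ) (δ : ℝ) : ℕ∞ :=
  sSup {z : ℕ∞ | ∃ ζ : ℕ, z = (ζ : ℕ∞) ∧
    ∀ v : ℕ → ℕ →₀ ℝ, IsBlockSeqOf v u → (∀ k, ‖vecIn e (v k)‖ = 1) →
      ∃ φ : ℕ → ℕ, StrictMono φ ∧ SpreadingModelL1 (fun k => vecIn e (v (φ k))) δ ζ}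

/-- The `(d, N, P, a)` distortion property (with the standing assumptions on `d, N, P, a`). -/
structure DistortionProperty [NormedAddCommGroup X] [NormedSpace ℝ X]
    (b : SchauderBasis X) (d : ℝ) (N P : ℕ → ℕ) (δ : ℕ → ℝ) : Prop where
  one_lt_d : 1 < d
  N_mono : StrictMono N
  P_mono : StrictMono P
  N_le_P : ∀ i, (if i = 0 then 1 else N (i - 1)) ≤ P i
  P_lt_N : ∀ i, 2 * P i < N i
  δ_pos : ∀ i, 0 < δ i
  δ_anti : ∀ i, δ (i + 1) ≤ δ i
  δ_null : Tendsto δ atTop (𝓝 (0 : ℝ))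
  asymptotic : ∀ j, AsymptoticL1 b (δ j) (N j)
  tau_lt : ∀ j, ∀ u : ℕ → ℕ →₀ ℝ, IsBlockSeq u → tau b.e u (d * δ j) < (P j : ℕ∞)

/-! ## Subspaces, hereditary indecomposability, total incomparability, distortion -/

/-- An (infinite-dimensional, closed) subspace of a Banach space. -/
def IsBanachSubspace [NormedAddCommGroup X] [NormedSpace ℝ X] (Y : Submodule ℝ X) : Prop :=
  IsClosed (Y : Set X) ∧ ¬ FiniteDimensional ℝ Y

/-- Hereditarily indecomposable. -/
def HI (X : Type*) [NormedAddCommGroup X] [NormedSpace ℝ X] : Prop :=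
  ∀ Y Z : Submodule ℝ X, IsBanachSubspace Y → IsBanachSubspace Z → Y ⊓ Z = ⊥ →
    ¬ IsClosed ((Y ⊔ Z : Submodule ℝ X) : Set X)

/-- No subspace of `X` is isomorphic to a subspace of `Y`. -/
def TotallyIncomparable (X Y : Type*) [NormedAddCommGroup X] [NormedSpace ℝ X]
    [NormedAddCommGroup Y] [NormedSpace ℝ Y] : Prop :=
  ∀ (U : Submodule ℝ X) (V : Submodule ℝ Y), IsBanachSubspace U → IsBanachSubspace V →
    IsEmpty (U ≃L[ℝ] V)

/-- An equivalent norm on `X`. -/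
structure IsEquivNorm [NormedAddCommGroup X] [NormedSpace ℝ X] (Nn : X → ℝ) : Prop where
  add_le : ∀ x y : X, Nn (x + y) ≤ Nn x + Nn y
  smul_eq : ∀ (a : ℝ) (x : X), Nn (a • x) = |a| * Nn x
  lower : ∃ c : ℝ, 0 < c ∧ ∀ x : X, c * ‖x‖ ≤ Nn x
  upper : ∃ C : ℝ, 0 < C ∧ ∀ x : X, Nn x ≤ C * ‖x‖

def ArbitrarilyDistortable (X : Type*) [NormedAddCommGroup X] [NormedSpace ℝ X] : Prop :=
  ∀ lam : ℝ, 1 < lam → ∃ Nn : X → ℝ, IsEquivNorm Nn ∧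
    ∀ Y : Submodule ℝ X, IsBanachSubspace Y →
      ∃ x ∈ Y, ∃ y ∈ Y, x ≠ 0 ∧ y ≠ 0 ∧ ‖x‖ = ‖y‖ ∧ lam < Nn x / Nn y

/-- Reflexivity: the canonical embedding into the double dual is surjective. -/
def IsReflexiveSpace (X : Type*) [NormedAddCommGroup X] [NormedSpace ℝ X] : Prop :=
  Function.Surjective (NormedSpace.inclusionInDoubleDual ℝ X)

/-- A bundled (real, infinite-dimensional or not) Banach space. -/
structure BanachSpaceB where
  carrier : Type
  [grp : NormedAddCommGroup carrier]
  [mod : NormedSpace ℝ carrier]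
  [comp : CompleteSpace carrier]

attribute [instance] BanachSpaceB.grp BanachSpaceB.mod BanachSpaceB.comp

/-! ## `M`-hit sequences -/

/-- The sequence `f_j^N` (0-indexed: `fN m n j` is the paper's `f_{j+1}^N`). -/
def fN (m n : ℕ → ℕ) : ℕ → ℕ
  | 0 => 1
  | j + 1 => sSup {s : ℕ | ∃ ρ : ℕ → ℕ,
      (∏ i ∈ Finset.range (j + 1), m i ^ ρ i) < m (j + 1) ^ 3 ∧
      s = ∑ i ∈ Finset.range (j + 1), ρ i * n i}

/-- Standing assumptions on the fixed sequences `M = (m_i)` and `L = (l_i)`. -/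
structure MLParams (m l : ℕ → ℕ) : Prop where
  m_mono : StrictMono m
  m_six : 6 < m 0
  m_sq : ∀ i, m i ^ 2 < m (i + 1)
  l_mono : StrictMono l
  l_four : 4 < l 0
  l_exp : ∀ i, m i < 2 ^ l i

/-- `N = (n_i)` (an infinite subset of `ℕ`, given by its increasing enumeration)
is `M`-hit: `l_j (f_j^N + 1) < n_j` for all `j`. -/
def MGoodSeq (m l n : ℕ → ℕ) : Prop :=
  StrictMono n ∧ ∀ j, l j * (fN m n j + 1) < n j

/-! ## Appropriate trees -/

/-- A node of a tree: a nonempty list of triples `(m-entry, interval, sign)`. -/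
abbrev GNode := List (ℕ × Finset ℕ × ℤ)

def mEnt (α : GNode) : ℕ := (α.getLastD (0, ∅, 1)).1
def iEnt (α : GNode) : Finset ℕ := (α.getLastD (0, ∅, 1)).2.1
def sEnt (α : GNode) : ℤ := (α.getLastD (0, ∅, 1)).2.2

/-- `α` is a terminal node of the tree `T`. -/
def IsTerminalIn (T : Finset GNode) (α : GNode) : Prop :=
  ∀ β ∈ T, α <+: β → β = α

/-- The immediate successors of `α` in `T`. -/
def childrenIn (T : Finset GNode) (α : GNode) : Finset GNode :=
  T.filter fun β => β.length = α.length + 1 ∧ α <+: β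

/-- Appropriate trees (with respect to the data `M = (m_i)`, `N = (n_i)`). -/
def IsAppropriate (m n : ℕ → ℕ) (T : Finset GNode) : Prop :=
  T.Nonempty ∧
  (∀ α ∈ T, α ≠ []) ∧
  (∀ α ∈ T, ∀ k, 0 < k → k ≤ α.length → α.take k ∈ T) ∧
  (∀ α ∈ T, ∀ β ∈ T, α.length = 1 → β.length = 1 → α = β) ∧
  (∀ α ∈ T, ∀ t ∈ α, ((t : ℕ × Finset ℕ × ℤ).2.2 = 1 ∨ t.2.2 = -1) ∧ t.2.1.Nonempty) ∧
  (∀ α ∈ T, IsTerminalIn T α → mEnt α = 0 ∧ ∃ p : ℕ, iEnt α = {p}) ∧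
  (∀ α ∈ T, ¬ IsTerminalIn T α → ∃ j : ℕ, mEnt α = m j ∧
    FamAdmissible (n j) ((childrenIn T α).image iEnt) ∧
    iEnt α = (childrenIn T α).sup iEnt)

/-- The family `𝒢` of appropriate trees. -/
def 𝒢 (m n : ℕ → ℕ) : Set (Finset GNode) := {T | IsAppropriate m n T}

/-- The root of a tree. -/
def rootOf (T : Finset GNode) : GNode :=
  if h : (T.filter fun α => α.length = 1).Nonempty then h.choose else []

/-- `m(α)`: product of the `M`-entries of the predecessor of `α`. -/
def mWeight (α : GNode) : ℕ := (α.dropLast.map fun t => t.1).prod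

/-- `ε(α)`: product of the signs of the proper predecessors of `α`. -/
def epsProd (α : GNode) : ℤ := (α.dropLast.map fun t => t.2.2).prod

/-- `n(α)`: sum of the `n_i` over the `M`-entries `m_i` of the predecessor of `α`. -/
def nVal (m n : ℕ → ℕ) (α : GNode) : ℕ :=
  (α.dropLast.map fun t => n (sInf {j | m j = t.1})).sum

/-- The point `p_α` of a terminal node. -/
def pOf (α : GNode) : ℕ := minF (iEnt α)

/-- The measure `mu_𝒯` associated to a tree. -/
def treeMeasure (T : Finset GNode) : ℕ →₀ ℝ :=
  ∑ α ∈ T.filter (fun α => IsTerminalIn T α),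
    ((mWeight α : ℝ)⁻¹ * ((epsProd α * sEnt α : ℤ) : ℝ)) • Finsupp.single (pOf α) (1 : ℝ)

/-- The weight `w(𝒯)`. -/
def treeWeight (T : Finset GNode) : ℕ :=
  if T.card = 1 then 1 else mEnt (rootOf T)

/-- Action of a finitely supported measure on an element of `c₀₀`. -/
def mpair (mu x : ℕ →₀ ℝ) : ℝ := mu.sum fun i c => c * x i

/-- The norming set `𝓜 = {mu_𝒯 : 𝒯 ∈ 𝒢}`. -/
def normingSetOf (m n : ℕ → ℕ) : Set (ℕ →₀ ℝ) :=
  {mu | ∃ T ∈ 𝒢 m n, mu = treeMeasure T}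

/-- The norm of `X_𝓜` on `c₀₀`. -/
def mNorm (m n : ℕ → ℕ) (x : ℕ →₀ ℝ) : ℝ :=
  sSup {r : ℝ | ∃ mu ∈ normingSetOf m n, r = mpair mu x}

/-- A family of trees is `S_k`-admissible if the family of root intervals is. -/
def TreeFamAdmissible (k : ℕ) (G₀ : Finset (Finset GNode)) : Prop :=
  FamAdmissible k (G₀.image fun T => iEnt (rootOf T))

/-! ## The repeated averages hierarchy -/

/-- Auxiliary step for the repeated averages hierarchy. -/
def ravgS (f : Set ℕ → ℕ → (ℕ →₀ ℝ)) (R : Set ℕ) : ℕ → (ℕ →₀ ℝ)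
  | 0 => ((sInf R : ℕ) : ℝ)⁻¹ • ∑ i ∈ Finset.range (sInf R), f R i
  | k + 1 =>
    let R' : Set ℕ := {r ∈ R | ∀ j ∈ (ravgS f R k).support, j < r}
    ((sInf R' : ℕ) : ℝ)⁻¹ • ∑ i ∈ Finset.range (sInf R'), f R' i

/-- The repeated averages hierarchy `ξ_k^R` (`k` 0-indexed). -/
def ravg : ℕ → Set ℕ → ℕ → (ℕ →₀ ℝ)
  | 0 => fun R k => Finsupp.single (Nat.nth (· ∈ R) k) 1
  | ξ + 1 => ravgS (ravg ξ)

/-- `‖mu‖_k = sup{mu(F) : F ∈ S_k}`. -/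
def measNorm (k : ℕ) (mu : ℕ →₀ ℝ) : ℝ :=
  sSup {r : ℝ | ∃ F ∈ Schreier k, r = ∑ i ∈ F, mu i}

/-- The sequence of minima of supports of a block basis. -/
def pSeq (u : ℕ → ℕ →₀ ℝ) (k : ℕ) : ℕ := minSupp (u k)

/-- `v` is a generic `(ε, ξ)` average of the block basis `u`. -/
def IsGenericAvg (u : ℕ → ℕ →₀ ℝ) (ε : ℝ) (ξ : ℕ) (v : ℕ →₀ ℝ) : Prop :=
  ∃ R : Set ℕ, R.Infinite ∧ R ⊆ Set.range (pSeq u) ∧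
    measNorm (ξ - 1) (ravg ξ R 0) < ε ∧
    v = (ravg ξ R 0).sum fun q c => c • u (sInf {k | pSeq u k = q})

/-- `v` is an `(ε, ξ)` average of `u`: a generic `(ε, ξ)` average of a normalized
(w.r.t. the norm `nrm`) block basis of `u`. -/
def IsAvg (nrm : (ℕ →₀ ℝ) → ℝ) (u : ℕ → ℕ →₀ ℝ) (ε : ℝ) (ξ : ℕ) (v : ℕ →₀ ℝ) : Prop :=
  ∃ w : ℕ → ℕ →₀ ℝ, IsBlockSeqOf w u ∧ (∀ k, nrm (w k) = 1) ∧ IsGenericAvg w ε ξ v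

/-- `x` is a smoothly normalized `(ε, ξ)` average of `u`. -/
def IsSmoothNormAvg (nrm : (ℕ →₀ ℝ) → ℝ) (u : ℕ → ℕ →₀ ℝ) (ε : ℝ) (ξ : ℕ)
    (x : ℕ →₀ ℝ) : Prop :=
  ∃ v : ℕ →₀ ℝ, IsAvg nrm u ε ξ v ∧ (1 : ℝ) / 2 ≤ nrm v ∧ x = (nrm v)⁻¹ • v

/-! ## Infinite subsets of `ℕ` as points of the Cantor space -/

/-- The increasing enumeration of the set coded by `S : ℕ → Bool` (1st element = index 0). -/
def enumOf (S : ℕ → Bool) : ℕ → ℕ := Nat.nth fun i => S i = true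

/-- The set coded by `S` is `M`-hit. -/
def MGoodB (m l : ℕ → ℕ) (S : ℕ → Bool) : Prop := MGoodSeq m l (enumOf S)

/-- The infinite subsets of the set coded by `N₀`, as a topological (sub)space of the
Cantor space `ℕ → Bool` with the product (pointwise convergence) topology. -/
def SubsetsOf (N₀ : ℕ → Bool) : Type :=
  {S : ℕ → Bool // {i | S i = true}.Infinite ∧ ∀ i, S i = true → N₀ i = true}

instance (N₀ : ℕ → Bool) : TopologicalSpace (SubsetsOf N₀) :=
  instTopologicalSpaceSubtype

/-!
On an interval `J`, the coordinates of `Σ (-1)^(i+1) a_i e_{t_i}` add up to an alternating sum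
over a run `s ≤ i ≤ e` of indices, which has absolute value at most `a_s` since `a` is
non-negative and non-increasing. Picking the point `t_s` in each interval that meets the support
gives a set dominating, in order, the minima of an `S_ξ`-admissible family; it is therefore in
`S_ξ` because Schreier families are hereditary and spreading, and summing `|a_i|` over it bounds
the conditional norm.
-/

open Finset

lemma minF_le {I : Finset ℕ} {q : ℕ} (h : q ∈ I) : minF I ≤ q :=
  Nat.sInf_le (by exact_mod_cast h)

lemma minF_mem {I : Finset ℕ} (h : I.Nonempty) : minF I ∈ I := by
  simpa [minF, h.csInf_eq_min'] using I.min'_mem h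

lemma biUnion_mem_schreier_succ {n : ℕ} {B : Finset ℕ} {G : ℕ → Finset ℕ}
    (hG : ∀ i ∈ B, G i ∈ Schreier n) (hlt : ∀ i ∈ B, ∀ j ∈ B, i < j → FinLt (G i) (G j))
    (hcard : ∀ p ∈ B.biUnion G, #B ≤ p) : B.biUnion G ∈ Schreier (n + 1) := by
  set B' := B.filter fun i => (G i).Nonempty
  have hB'B : B' ⊆ B := filter_subset _ _
  have hunion : B.biUnion G = B'.biUnion G := by
    ext p
    simp only [mem_biUnion, B', mem_filter]
    exact ⟨fun ⟨i, hi, hp⟩ => ⟨i, ⟨hi, p, hp⟩, hp⟩, fun ⟨i, ⟨hi, _⟩, hp⟩ => ⟨i, hi, hp⟩⟩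
  rcases B'.eq_empty_or_nonempty with hB' | hB'
  · exact Or.inl (by rw [hunion, hB', biUnion_empty])
  set σ := B'.orderEmbOfFin rfl
  have hσ : ∀ j, (σ j : ℕ) ∈ B' := fun j => orderEmbOfFin_mem _ _ _
  refine Or.inr ⟨#B', fun j => if h : j < #B' then G (σ ⟨j, h⟩) else ∅, card_pos.2 hB',
    fun j hj => ?_, fun i j hij hj => ?_, fun p hp => ?_, ?_⟩
  · simp only [hj, dif_pos]
    exact ⟨hG _ (hB'B (hσ _)), (mem_filter.1 (hσ _)).2⟩
  · simp only [hj, hij.trans hj, dif_pos]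
    exact hlt _ (hB'B (hσ _)) _ (hB'B (hσ _)) (σ.strictMono (Fin.mk_lt_mk.2 hij))
  · simp only [card_pos.2 hB', dif_pos] at hp
    calc #B' ≤ #B := card_le_card hB'B
      _ ≤ p := hcard p (mem_biUnion.2 ⟨_, hB'B (hσ _), hp⟩)
  · rw [hunion]
    ext p
    simp only [mem_biUnion, mem_range]
    constructor
    · rintro ⟨i, hi, hp⟩
      obtain ⟨⟨j, hj⟩, rfl⟩ : i ∈ Set.range σ := by
        rw [range_orderEmbOfFin]; exact_mod_cast hi
      exact ⟨j, hj, by simpa [hj] using hp⟩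
    · rintro ⟨j, hj, hp⟩
      simp only [hj, dif_pos] at hp
      exact ⟨_, hσ _, hp⟩

lemma le_of_mem_biUnion_range {k p : ℕ} {G : ℕ → Finset ℕ} (hG0 : (G 0).Nonempty)
    (hGlt : ∀ i j, i < j → j < k → FinLt (G i) (G j)) (hk : ∀ j ∈ G 0, k ≤ j)
    (hp : p ∈ (range k).biUnion G) : k ≤ p := by
  obtain ⟨i, hi, hp⟩ := mem_biUnion.1 hp
  rcases Nat.eq_zero_or_pos i with rfl | hi0
  · exact hk p hp
  · obtain ⟨q, hq⟩ := hG0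
    exact (hk q hq).trans (hGlt 0 i hi0 (mem_range.1 hi) q hq p hp).le

/-- Schreier families are hereditary and spreading. -/
theorem image_mem_schreier_of_le {ι : Type*} [LinearOrder ι] {n : ℕ} {P : Finset ℕ}
    (hP : P ∈ Schreier n) {B : Finset ι} {g h : ι → ℕ} (hg : StrictMonoOn g B)
    (hh : StrictMonoOn h B) (hgP : ∀ b ∈ B, g b ∈ P) (hgh : ∀ b ∈ B, g b ≤ h b) :
    B.image h ∈ Schreier n := by
  induction n generalizing P B with
  | zero =>
    calc #(B.image h) ≤ #B := card_image_le
      _ = #(B.image g) := (card_image_of_injOn hg.injOn).symm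
      _ ≤ #P := card_le_card fun p hp => by
          obtain ⟨b, hb, rfl⟩ := mem_image.1 hp; exact hgP b hb
      _ ≤ 1 := hP
  | succ n ih =>
    rcases hP with rfl | ⟨k, G, hk0, hG, hGlt, hk, rfl⟩
    · obtain rfl : B = ∅ := eq_empty_of_forall_notMem fun b hb => by simpa using hgP b hb
      exact Or.inl (image_empty _)
    have hblocks : B.image h = (range k).biUnion fun i => (B.filter (g · ∈ G i)).image h := by
      ext q
      simp only [mem_image, mem_biUnion, mem_filter, mem_range]
      constructor
      · rintro ⟨b, hb, rfl⟩
        obtain ⟨i, hi, hgb⟩ := mem_biUnion.1 (hgP b hb)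
        exact ⟨i, mem_range.1 hi, b, ⟨hb, hgb⟩, rfl⟩
      · rintro ⟨i, -, b, ⟨hb, -⟩, rfl⟩
        exact ⟨b, hb, rfl⟩
    rw [hblocks]
    refine biUnion_mem_schreier_succ (fun i hi => ?_) (fun i hi j hj hij => ?_) (fun q hq => ?_)
    · have hsub : ((B.filter (g · ∈ G i) : Finset ι) : Set ι) ⊆ B :=
        coe_subset.2 (filter_subset _ _)
      exact ih (hG i (mem_range.1 hi)).1 (hg.mono hsub) (hh.mono hsub)
        (fun b hb => (mem_filter.1 hb).2) (fun b hb => hgh b (mem_filter.1 hb).1)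
    · simp only [FinLt, mem_image, mem_filter]
      rintro _ ⟨b, ⟨hb, hgb⟩, rfl⟩ _ ⟨b', ⟨hb', hgb'⟩, rfl⟩
      have hgg : g b < g b' := hGlt i j hij (mem_range.1 hj) _ hgb _ hgb'
      exact hh hb hb' ((hg.lt_iff_lt hb hb').1 hgg)
    · simp only [mem_biUnion, mem_image, mem_filter, mem_range] at hq
      obtain ⟨i, hi, b, ⟨hb, hgb⟩, rfl⟩ := hq
      rw [card_range]
      exact (le_of_mem_biUnion_range (hG 0 hk0).2 hGlt hk
        (mem_biUnion.2 ⟨i, mem_range.2 hi, hgb⟩)).trans (hgh b hb)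

theorem sum_range_succ_alternating_mem_Icc {f : ℕ → ℝ} {n : ℕ} (hf : ∀ i ≤ n, 0 ≤ f i)
    (hanti : ∀ i < n, f (i + 1) ≤ f i) :
    ∑ i ∈ range (n + 1), (-1) ^ i * f i ∈ Set.Icc 0 (f 0) := by
  induction n generalizing f with
  | zero => simpa using hf 0 le_rfl
  | succ n ih =>
    have htail := @ih (fun i => f (i + 1)) (fun i hi => hf _ (by omega))
      (fun i hi => hanti _ (by omega))
    have hsplit : ∑ i ∈ range (n + 1 + 1), (-1) ^ i * f i =
        f 0 - ∑ i ∈ range (n + 1), (-1) ^ i * f (i + 1) := by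
      rw [sum_range_succ']
      simp [pow_succ, sub_eq_add_neg, ← sum_neg_distrib, add_comm]
    have h01 := hanti 0 (by omega)
    rw [hsplit]
    constructor <;> linarith [htail.1, htail.2]

theorem eq_Icc_min'_max'_of_ordConnected {I : Finset ℕ} (hI : I.Nonempty)
    (hconv : (I : Set ℕ).OrdConnected) : I = Icc (I.min' hI) (I.max' hI) := by
  ext i
  refine ⟨fun hi => mem_Icc.2 ⟨I.min'_le i hi, I.le_max' i hi⟩, fun hi => ?_⟩
  exact_mod_cast hconv.out (I.min'_mem hI) (I.max'_mem hI) (by simpa using hi)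

theorem abs_sum_alternating_le_of_ordConnected {a : ℕ → ℝ} {I : Finset ℕ} (hI : I.Nonempty)
    (hconv : (I : Set ℕ).OrdConnected) (hpos : ∀ i ∈ I, 0 ≤ a i) (hanti : AntitoneOn a I) :
    |∑ i ∈ I, (-1) ^ (i + 1) * a i| ≤ a (I.min' hI) := by
  set s := I.min' hI
  obtain ⟨d, hd⟩ : ∃ d, I.max' hI = s + d := ⟨I.max' hI - s, by
    have := I.min'_le_max' hI; omega⟩
  have hmem : ∀ i ≤ d, s + i ∈ I := fun i hi => by
    rw [eq_Icc_min'_max'_of_ordConnected hI hconv, mem_Icc]; omega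
  have hsum : ∑ i ∈ I, (-1) ^ (i + 1) * a i =
      (-1) ^ (s + 1) * ∑ i ∈ range (d + 1), (-1) ^ i * a (s + i) := by
    rw [eq_Icc_min'_max'_of_ordConnected hI hconv, hd, ← Ico_add_one_right_eq_Icc,
      sum_Ico_eq_sum_range, mul_sum]
    exact sum_congr (by congr 1; omega) fun i _ => by ring
  have hbound := sum_range_succ_alternating_mem_Icc (f := fun i => a (s + i))
    (fun i hi => hpos _ (hmem i hi))
    (fun i hi => hanti (hmem i hi.le) (hmem (i + 1) hi) (by omega))
  rw [hsum, abs_mul, abs_pow, abs_neg, abs_one, one_pow, one_mul, abs_of_nonneg hbound.1]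
  simpa using hbound.2

theorem sum_apply_sum_smul_single {ι : Type*} (s : Finset ι) (c : ι → ℝ) (t : ι → ℕ)
    (J : Finset ℕ) :
    ∑ p ∈ J, (∑ i ∈ s, c i • Finsupp.single (t i) (1 : ℝ)) p = ∑ i ∈ s with t i ∈ J, c i := by
  simp only [Finsupp.finsetSum_apply, Finsupp.smul_apply, Finsupp.single_apply, smul_eq_mul,
    mul_ite, mul_one, mul_zero]
  rw [sum_comm, sum_filter]
  exact sum_congr rfl fun i _ => sum_ite_eq J (t i) _

theorem sum_smul_single_apply_of_injOn {ι : Type*} {s : Finset ι} (c : ι → ℝ) {t : ι → ℕ}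
    (ht : Set.InjOn t s) {i : ι} (hi : i ∈ s) :
    (∑ j ∈ s, c j • Finsupp.single (t j) (1 : ℝ)) (t i) = c i := by
  rw [Finsupp.finsetSum_apply, sum_eq_single_of_mem i hi (fun j hj hji => ?_)]
  · simp
  · simp [ht.ne hj hi hji]

theorem sum_abs_le_schreierNorm {n : ℕ} {F : Finset ℕ} (hF : F ∈ Schreier n) (y : ℕ →₀ ℝ) :
    ∑ i ∈ F, |y i| ≤ schreierNorm n y := by
  refine le_csSup ⟨∑ i ∈ y.support, |y i|, ?_⟩ ⟨F, hF, rfl⟩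
  rintro _ ⟨G, -, rfl⟩
  calc ∑ i ∈ G, |y i| ≤ ∑ i ∈ G ∪ y.support, |y i| :=
        sum_le_sum_of_subset_of_nonneg subset_union_left fun _ _ _ => abs_nonneg _
    _ = ∑ i ∈ y.support, |y i| := (sum_subset subset_union_right fun i _ hi => by
        simp [Finsupp.notMem_support_iff.1 hi]).symm

theorem schreierNorm_nonneg (n : ℕ) (y : ℕ →₀ ℝ) : 0 ≤ schreierNorm n y :=
  Real.sSup_nonneg (by rintro _ ⟨F, -, rfl⟩; positivity)

theorem strictMonoOn_of_mem_blocks {m : ℕ} {J : ℕ → Finset ℕ}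
    (hJ : ∀ i j, i < j → j < m → FinLt (J i) (J j)) {B : Finset ℕ} (hB : B ⊆ range m)
    {p : ℕ → ℕ} (hp : ∀ j ∈ B, p j ∈ J j) : StrictMonoOn p B :=
  fun i hi j hj hij => hJ i j hij (mem_range.1 (hB hj)) _ (hp i hi) _ (hp j hj)

theorem ordConnected_filter_mem_Icc {k : ℕ} {t : ℕ → ℕ} (ht : MonotoneOn t (Set.Iio k))
    (c d : ℕ) : (((range k).filter fun i => t i ∈ Icc c d : Finset ℕ) : Set ℕ).OrdConnected := by
  refine ⟨fun i hi l hl j hj => ?_⟩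
  simp only [coe_filter, mem_range, mem_Icc, Set.mem_ofPred_eq] at hi hl ⊢
  have hjk : j < k := hj.2.trans_lt hl.1
  exact ⟨hjk, hi.2.1.trans (ht hi.1 hjk hj.1), (ht hjk hl.1 hj.2).trans hl.2.2⟩

theorem abs_sum_alternating_filter_mem_Icc_le {k : ℕ} {a : ℕ → ℝ} {t : ℕ → ℕ}
    (hpos : ∀ i < k, 0 ≤ a i) (hanti : AntitoneOn a (Set.Iio k)) (ht : MonotoneOn t (Set.Iio k))
    {c d : ℕ} (hne : ((range k).filter (t · ∈ Icc c d)).Nonempty) :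
    |∑ i ∈ range k with t i ∈ Icc c d, (-1) ^ (i + 1) * a i| ≤
      a (minF ((range k).filter (t · ∈ Icc c d))) := by
  have hIk : (((range k).filter (t · ∈ Icc c d) : Finset ℕ) : Set ℕ) ⊆ Set.Iio k :=
    fun i hi => by simpa using (mem_filter.1 hi).1
  rw [minF, hne.csInf_eq_min']
  exact abs_sum_alternating_le_of_ordConnected hne (ordConnected_filter_mem_Icc ht c d)
    (fun i hi => hpos i (hIk hi)) (hanti.mono hIk)

theorem sum_abs_alternating_le_schreierNorm {k : ℕ} {a : ℕ → ℝ} {t : ℕ → ℕ}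
    (hpos : ∀ i < k, 0 ≤ a i) (hanti : AntitoneOn a (Set.Iio k))
    (ht : StrictMonoOn t (Set.Iio k)) {ξ m : ℕ}
    {J : ℕ → Finset ℕ} (hJ : ∀ j < m, ∃ c d, J j = Icc c d) (hadm : Admissible ξ m J) :
    ∑ j ∈ range m,
        |∑ p ∈ J j, (∑ i ∈ range k, ((-1 : ℝ) ^ (i + 1) * a i) • Finsupp.single (t i) 1) p| ≤
      schreierNorm ξ (∑ i ∈ range k, a i • Finsupp.single (t i) (1 : ℝ)) := by
  obtain ⟨hJne, hJlt, hJmin⟩ := hadm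
  set I : ℕ → Finset ℕ := fun j => (range k).filter (t · ∈ J j)
  set s : ℕ → ℕ := fun j => minF (I j)
  set hit := (range m).filter fun j => (I j).Nonempty
  have hhit : hit ⊆ range m := filter_subset _ _
  have hs : ∀ j ∈ hit, s j < k ∧ t (s j) ∈ J j := fun j hj => by
    simpa [I] using minF_mem (mem_filter.1 hj).2
  have hbound : ∀ j ∈ hit, |∑ i ∈ I j, (-1) ^ (i + 1) * a i| ≤ a (s j) := by
    intro j hj
    obtain ⟨c, d, hcd⟩ := hJ j (mem_range.1 (hhit hj))
    have hne := (mem_filter.1 hj).2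
    simp only [I, s, hcd] at hne ⊢
    exact abs_sum_alternating_filter_mem_Icc_le hpos hanti ht.monotoneOn hne
  have hmonoJ : StrictMonoOn (fun j => minF (J j)) hit :=
    strictMonoOn_of_mem_blocks hJlt hhit fun j hj => minF_mem (hJne j (mem_range.1 (hhit hj)))
  have hmonoF : StrictMonoOn (fun j => t (s j)) hit :=
    strictMonoOn_of_mem_blocks hJlt hhit fun j hj => (hs j hj).2
  have hF : hit.image (fun j => t (s j)) ∈ Schreier ξ :=
    image_mem_schreier_of_le hJmin hmonoJ hmonoF
      (fun j hj => mem_image_of_mem _ (hhit hj)) (fun j hj => minF_le (hs j hj).2)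
  have hy : ∀ j ∈ hit,
      (∑ i ∈ range k, a i • Finsupp.single (t i) (1 : ℝ)) (t (s j)) = a (s j) := fun j hj =>
    sum_smul_single_apply_of_injOn a (ht.injOn.mono fun i hi => by simpa using hi)
      (mem_range.2 (hs j hj).1)
  simp only [sum_apply_sum_smul_single]
  calc ∑ j ∈ range m, |∑ i ∈ I j, (-1) ^ (i + 1) * a i|
      = ∑ j ∈ hit, |∑ i ∈ I j, (-1) ^ (i + 1) * a i| :=
        (sum_subset hhit fun j hj hjg => by
          simp [not_nonempty_iff_eq_empty.1 fun h => hjg (mem_filter.2 ⟨hj, h⟩)]).symm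
    _ ≤ ∑ j ∈ hit, a (s j) := sum_le_sum hbound
    _ = ∑ q ∈ hit.image (fun j => t (s j)),
          |(∑ i ∈ range k, a i • Finsupp.single (t i) 1) q| := by
        rw [sum_image hmonoF.injOn]
        exact sum_congr rfl fun j hj => by rw [hy j hj, abs_of_nonneg (hpos _ (hs j hj).1)]
    _ ≤ _ := sum_abs_le_schreierNorm hF _

theorem statement19 (k ξ : ℕ) (a : ℕ → ℝ) (t : ℕ → ℕ)
    (hpos : ∀ i < k, 0 ≤ a i) (hanti : ∀ i j, i ≤ j → j < k → a j ≤ a i)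
    (ht : ∀ i j, i < j → j < k → t i < t j) :
    cschreierNorm ξ (∑ i ∈ Finset.range k,
        ((-1 : ℝ) ^ (i + 1) * a i) • Finsupp.single (t i) (1 : ℝ)) ≤
      schreierNorm ξ (∑ i ∈ Finset.range k, a i • Finsupp.single (t i) (1 : ℝ)) := by
  refine Real.sSup_le ?_ (schreierNorm_nonneg _ _)
  rintro _ ⟨m, J, hJ, hadm, rfl⟩
  exact sum_abs_alternating_le_schreierNorm hpos (fun i _ j hj hij => hanti i j hij hj)
    (fun i _ j hj hij => ht i j hij hj) hJ hadm

end Gasparis
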